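/- arXiv:1709.06787 — 5 statements merged into one kernel-verified Lean document; each statement's English description precedes it below -/
import Mathlib

section
/- The Skeel condition number of the (n+1)×(n+1) lower triangular Pascal matrix P_L equals 3^n, i.e., the ∞-norm of |P_L⁻¹|·|P_L| is 3^n. -/
/-!
`P⁻¹` is the signed Pascal matrix `(-1)^(i+j) C(i,j)`, so `|P⁻¹| = P` and the Skeel condition
number is the largest row sum of `P²`. Both facts come from the identity
`∑ₖ C(i,k) C(k,j) x^k = C(i,j) x^j (1+x)^(i-j)`, at `x = -1` and `x = 1`: the latter gives
`(P²)ᵢⱼ = C(i,j) 2^(i-j)`, whose `i`-th row sums to `3^i` by the binomial theorem.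
-/

open Finset

theorem Fin.sum_univ_choose_mul_eq_sum_range {R : Type*} [NonAssocSemiring R] {m i : ℕ}
    (hi : i < m) (f : ℕ → R) :
    ∑ k : Fin m, (i.choose k : R) * f k = ∑ k ∈ range (i + 1), (i.choose k : R) * f k := by
  rw [Fin.sum_univ_eq_sum_range (fun k => (i.choose k : R) * f k)]
  exact eventually_constant_sum (fun k hk => by simp [Nat.choose_eq_zero_of_lt hk]) hi

theorem sum_range_choose_mul_choose_mul_pow {R : Type*} [CommSemiring R] (x : R) (i j : ℕ) :
    ∑ k ∈ range (i + 1), (i.choose k : R) * (k.choose j * x ^ k) =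
      i.choose j * x ^ j * (1 + x) ^ (i - j) := by
  rcases lt_or_ge i j with hij | hji
  · rw [Nat.choose_eq_zero_of_lt hij, Nat.cast_zero, zero_mul, zero_mul]
    refine sum_eq_zero fun k hk => ?_
    simp [Nat.choose_eq_zero_of_lt ((mem_range_succ_iff.1 hk).trans_lt hij)]
  obtain ⟨d, rfl⟩ := Nat.exists_eq_add_of_le hji
  rw [add_assoc, sum_range_add,
    sum_eq_zero fun k hk => by simp [Nat.choose_eq_zero_of_lt (mem_range.1 hk)],
    zero_add, Nat.add_sub_cancel_left, add_comm 1 x, add_pow, mul_sum]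
  refine sum_congr rfl fun t _ => ?_
  rw [← mul_assoc, ← Nat.cast_mul, Nat.choose_mul (Nat.le_add_right j t),
    Nat.add_sub_cancel_left, Nat.add_sub_cancel_left]
  push_cast
  ring

def pascal (R : Type*) [NatCast R] (m : ℕ) : Matrix (Fin m) (Fin m) R :=
  Matrix.of fun i j => ((i : ℕ).choose j : R)

def signedPascal (R : Type*) [Ring R] (m : ℕ) : Matrix (Fin m) (Fin m) R :=
  Matrix.of fun i j => (-1) ^ ((i : ℕ) + j) * ((i : ℕ).choose j : R)

section

variable {R : Type*} {m : ℕ}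

theorem pascal_mul_signedPascal [CommRing R] : pascal R m * signedPascal R m = 1 := by
  ext i j
  have key := sum_range_choose_mul_choose_mul_pow (-1 : R) i j
  rw [add_neg_cancel] at key
  calc (pascal R m * signedPascal R m) i j
      = (-1) ^ (j : ℕ) *
          ∑ k : Fin m, ((i : ℕ).choose k : R) * ((k : ℕ).choose j * (-1) ^ (k : ℕ)) := by
        rw [Matrix.mul_apply, mul_sum]
        refine sum_congr rfl fun k _ => ?_
        simp only [pascal, signedPascal, Matrix.of_apply, pow_add]
        ring
    _ = ((i : ℕ).choose j : R) * 0 ^ ((i : ℕ) - j) := by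
        have hsign : (-1 : R) ^ (j : ℕ) * (-1) ^ (j : ℕ) = 1 := by
          rw [← pow_add, Even.neg_one_pow ⟨_, rfl⟩]
        rw [Fin.sum_univ_choose_mul_eq_sum_range i.2 (fun k => (k.choose j * (-1) ^ k : R)), key]
        linear_combination ((i : ℕ).choose j * 0 ^ ((i : ℕ) - j) : R) * hsign
    _ = (1 : Matrix (Fin m) (Fin m) R) i j := by
        rcases lt_trichotomy i j with h | rfl | h
        · simp [Nat.choose_eq_zero_of_lt (Fin.lt_def.1 h), h.ne]
        · simp
        · simp [zero_pow (Nat.sub_ne_zero_of_lt (Fin.lt_def.1 h)), h.ne']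

theorem inv_pascal [CommRing R] : (pascal R m)⁻¹ = signedPascal R m :=
  Matrix.inv_eq_right_inv pascal_mul_signedPascal

theorem abs_pascal_apply [Ring R] [LinearOrder R] [IsStrictOrderedRing R] (i j : Fin m) :
    |pascal R m i j| = pascal R m i j :=
  Nat.abs_cast _

theorem abs_inv_pascal_apply [CommRing R] [LinearOrder R] [IsStrictOrderedRing R]
    (i j : Fin m) : |(pascal R m)⁻¹ i j| = pascal R m i j := by
  rw [inv_pascal]
  simp [signedPascal, pascal, abs_mul]

theorem pascal_mul_pascal_apply [CommSemiring R] (i j : Fin m) :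
    (pascal R m * pascal R m) i j = (i : ℕ).choose j * 2 ^ ((i : ℕ) - j) := by
  have key := sum_range_choose_mul_choose_mul_pow (1 : R) i j
  simp only [one_pow, mul_one, one_add_one_eq_two] at key
  simp only [Matrix.mul_apply, pascal, Matrix.of_apply]
  rw [Fin.sum_univ_choose_mul_eq_sum_range i.2 (fun k => (k.choose j : R)), key]

theorem sum_pascal_mul_pascal_apply [CommSemiring R] (i : Fin m) :
    ∑ j, (pascal R m * pascal R m) i j = 3 ^ (i : ℕ) := by
  simp_rw [pascal_mul_pascal_apply]
  rw [Fin.sum_univ_choose_mul_eq_sum_range i.2 (fun j => (2 : R) ^ ((i : ℕ) - j)),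
    show (3 : R) = 1 + 2 by norm_num, add_pow]
  simp [mul_comm]

end

/-- Skeel condition number of the lower triangular Pascal matrix is `3^n`. -/
theorem skeel_cond_pascal (n : ℕ) :
    let P : Matrix (Fin (n + 1)) (Fin (n + 1)) ℝ :=
      fun i j => ((i : ℕ).choose (j : ℕ) : ℝ)
    (⨆ i : Fin (n + 1), ∑ j : Fin (n + 1),
        abs (∑ k : Fin (n + 1), |P⁻¹ i k| * |P k j|)) = 3 ^ n := by
  intro P
  have hP : P = pascal ℝ (n + 1) := rfl
  simp only [hP, abs_inv_pascal_apply, abs_pascal_apply, ← Matrix.mul_apply]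
  have hrow (i : Fin (n + 1)) :
      ∑ j, |(pascal ℝ (n + 1) * pascal ℝ (n + 1)) i j| = 3 ^ (i : ℕ) := by
    rw [← sum_pascal_mul_pascal_apply i]
    exact sum_congr rfl fun j _ => abs_of_nonneg <| by rw [pascal_mul_pascal_apply]; positivity
  rw [iSup_congr hrow]
  exact le_antisymm (ciSup_le fun i => pow_le_pow_right₀ (by norm_num) i.is_le)
    (le_ciSup_of_le (Set.finite_range _).bddAbove (Fin.last n) le_rfl)
end

section
/- For n ≥ 1 and equidistant nodes x_i = a + ℓ·i/n with ℓ = b - a > 0, the inverse of the collocation matrix L of the monic Newton basis has entries (-1)^{i-j}·(n/ℓ)^i / (j!·(i-j)!) for j ≤ i and 0 for j > i. -/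
/-!
For equidistant nodes `x i = a + h i` (here `h = ℓ / n`) one has
`ω_j(x_i) = h^j i(i-1)⋯(i-j+1) = C(i,j) j! h^j`, so the collocation matrix is the Pascal matrix
`(C(i,j))` times `diag(j! h^j)`. The Pascal matrix is inverted by `((-1)^(i-j) C(i,j))`; this is
binomial inversion, read off from the `i`-th forward difference of `x ↦ C(x,k)` at `0`, which is
`δ_ik`.
-/

open Finset Matrix

theorem sum_range_neg_one_pow_mul_choose_mul_choose (i k : ℕ) :
    ∑ j ∈ range (i + 1), (-1 : ℤ) ^ (i - j) * i.choose j * j.choose k =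
      if i = k then 1 else 0 := by
  have h := fwdDiff_iter_eq_sum_shift (1 : ℕ) (fun x => (x.choose k : ℤ)) i 0
  rw [fwdDiff_iter_choose_zero] at h
  simpa [smul_eq_mul] using h.symm

theorem Nat.cast_descFactorial_eq_prod_range {R : Type*} [CommRing R] (n k : ℕ) :
    (n.descFactorial k : R) = ∏ j ∈ range k, ((n : R) - j) := by
  rw [← descPochhammer_eval_eq_descFactorial, descPochhammer_eval_eq_prod_range]

def pascalMatrix (R : Type*) [Semiring R] (m : ℕ) : Matrix (Fin m) (Fin m) R :=
  of fun i j => ((i : ℕ).choose j : R)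

def signedPascalMatrix (R : Type*) [Ring R] (m : ℕ) : Matrix (Fin m) (Fin m) R :=
  of fun i j => (-1) ^ ((i : ℕ) - j) * ((i : ℕ).choose j : R)

def newtonCollocationMatrix {R : Type*} [CommRing R] (x : ℕ → R) (m : ℕ) :
    Matrix (Fin m) (Fin m) R :=
  of fun i j => ∏ k ∈ range j, (x i - x k)

theorem signedPascalMatrix_mul_pascalMatrix {R : Type*} [Ring R] (m : ℕ) :
    signedPascalMatrix R m * pascalMatrix R m = 1 := by
  ext i k
  have hvanish : ∀ j ∈ range m, j ∉ range ((i : ℕ) + 1) →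
      (-1 : ℤ) ^ ((i : ℕ) - j) * (i : ℕ).choose j * j.choose k = 0 := fun j _ hj => by
    rw [Nat.choose_eq_zero_of_lt (by simpa using hj)]
    simp
  have hint := sum_range_neg_one_pow_mul_choose_mul_choose i k
  rw [sum_subset (range_subset_range.2 i.isLt) hvanish] at hint
  simp only [mul_apply, signedPascalMatrix, pascalMatrix, of_apply, one_apply, Fin.ext_iff]
  rw [Fin.sum_univ_eq_sum_range
    (fun j => (-1 : R) ^ ((i : ℕ) - j) * ((i : ℕ).choose j) * (j.choose k))]
  simpa [apply_ite] using congrArg (Int.cast : ℤ → R) hint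

theorem newtonCollocationMatrix_add_mul {R : Type*} [CommRing R] (a h : R) (m : ℕ) :
    newtonCollocationMatrix (fun k : ℕ => a + h * k) m =
      pascalMatrix R m * diagonal fun j : Fin m => ((j : ℕ).factorial : R) * h ^ (j : ℕ) := by
  ext i j
  have hdiff : ∀ k ∈ range (j : ℕ), a + h * (i : ℕ) - (a + h * k) = h * ((i : ℕ) - k) :=
    fun k _ => by ring
  rw [mul_diagonal, newtonCollocationMatrix, of_apply, prod_congr rfl hdiff, prod_mul_distrib,
    prod_const, card_range, ← Nat.cast_descFactorial_eq_prod_range,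
    Nat.descFactorial_eq_factorial_mul_choose, pascalMatrix, of_apply]
  push_cast
  ring

section Field

variable {K : Type*} [Field K] [CharZero K]

theorem inv_newtonCollocationMatrix_add_mul (a : K) {h : K} (hh : h ≠ 0) (m : ℕ) :
    (newtonCollocationMatrix (fun k : ℕ => a + h * k) m)⁻¹ =
      diagonal (fun i : Fin m => ((i : ℕ).factorial * h ^ (i : ℕ))⁻¹) *
        signedPascalMatrix K m := by
  refine inv_eq_left_inv ?_
  rw [newtonCollocationMatrix_add_mul, Matrix.mul_assoc,
    ← Matrix.mul_assoc (signedPascalMatrix K m), signedPascalMatrix_mul_pascalMatrix,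
    Matrix.one_mul, diagonal_mul_diagonal, ← diagonal_one]
  congr 1 with i
  exact inv_mul_cancel₀ (mul_ne_zero (Nat.cast_ne_zero.2 (Nat.factorial_ne_zero _))
    (pow_ne_zero _ hh))

theorem inv_newtonCollocationMatrix_add_mul_apply (a : K) {h : K} (hh : h ≠ 0) {m : ℕ}
    (i j : Fin m) :
    (newtonCollocationMatrix (fun k : ℕ => a + h * k) m)⁻¹ i j =
      if (j : ℕ) ≤ i then
        (-1) ^ ((i : ℕ) - j) * h⁻¹ ^ (i : ℕ) /
          ((j : ℕ).factorial * ((i : ℕ) - j).factorial)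
      else 0 := by
  rw [inv_newtonCollocationMatrix_add_mul a hh, diagonal_mul, signedPascalMatrix, of_apply]
  split_ifs with hji
  · have hi : ((i : ℕ).factorial : K) ≠ 0 := Nat.cast_ne_zero.2 (Nat.factorial_ne_zero _)
    rw [Nat.cast_choose K hji, inv_pow]
    field_simp
  · rw [Nat.choose_eq_zero_of_lt (not_le.1 hji)]
    simp

end Field

theorem monic_newton_collocation_inverse_entries_general (n : ℕ) (hn : 1 ≤ n) (a ℓ : ℝ)
    (hpos : 0 < ℓ)
    (x : ℕ → ℝ) (hx : ∀ i, x i = a + ℓ * i / n)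
    (L : Matrix (Fin (n + 1)) (Fin (n + 1)) ℝ)
    (hL : ∀ i j : Fin (n + 1), L i j = ∏ k ∈ Finset.range (j : ℕ), (x i - x k)) :
    ∀ i j : Fin (n + 1),
      L⁻¹ i j = if (j : ℕ) ≤ (i : ℕ) then
          (-1 : ℝ) ^ ((i : ℕ) - (j : ℕ)) * (n / ℓ) ^ (i : ℕ) /
            ((j : ℕ).factorial * ((i : ℕ) - (j : ℕ)).factorial)
        else 0 := by
  have hstep : ℓ / n ≠ 0 := div_ne_zero hpos.ne' (Nat.cast_ne_zero.2 (by omega))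
  have hnodes : x = fun k : ℕ => a + ℓ / n * k := funext fun k => by rw [hx]; ring
  have hcolloc : L = newtonCollocationMatrix x (n + 1) := Matrix.ext hL
  intro i j
  rw [hcolloc, hnodes, inv_newtonCollocationMatrix_add_mul_apply a hstep, inv_div]

/-- Entries of the inverse of the collocation matrix of the monic Newton basis at
equidistant nodes. -/
theorem monic_newton_collocation_inverse_entries (n : ℕ) (hn : 1 ≤ n) (a b ℓ : ℝ)
    (hℓ : ℓ = b - a) (hpos : 0 < ℓ)
    (x : ℕ → ℝ) (hx : ∀ i, x i = a + ℓ * i / n)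
    (L : Matrix (Fin (n + 1)) (Fin (n + 1)) ℝ)
    (hL : ∀ i j : Fin (n + 1), L i j = ∏ k ∈ Finset.range (j : ℕ), (x i - x k)) :
    ∀ i j : Fin (n + 1),
      L⁻¹ i j = if (j : ℕ) ≤ (i : ℕ) then
          (-1 : ℝ) ^ ((i : ℕ) - (j : ℕ)) * (n / ℓ) ^ (i : ℕ) /
            ((j : ℕ).factorial * ((i : ℕ) - (j : ℕ)).factorial)
        else 0 :=
  monic_newton_collocation_inverse_entries_general n hn a ℓ hpos x hx L hL
end

section
/- If ℓ > 1, then the limit as n → ∞ of Γ(n+1, n/ℓ)/Γ(n+1) equals 1. -/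
open Real Filter

/-- The upper incomplete gamma function `Γ(a, x) = ∫_x^∞ t^(a-1) e^(-t) dt`. -/
noncomputable def upperGamma (a x : ℝ) : ℝ :=
  ∫ t in Set.Ioi x, t ^ (a - 1) * Real.exp (-t)

/-!
`Γ(a) = γ(a, x) + Γ(a, x)` with `γ(a, x) = ∫_0^x t^(a-1) e^(-t) dt`. On `(0, x]` we have
`e^(-t) ≤ e^((ℓ-1)x) e^(-ℓt)` for `ℓ ≥ 1`, whence `γ(a, x) ≤ e^((ℓ-1)x) ℓ^(-a) Γ(a)`. At `a = n + 1`,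
`x = n / ℓ` this gives `γ/Γ ≤ (e^(1-1/ℓ)/ℓ)^n / ℓ`, which decays geometrically because
`e^(1-1/ℓ) < ℓ` for `ℓ > 1` (i.e. `log ℓ > 1 - 1/ℓ`).
-/

open MeasureTheory Set

noncomputable def lowerGamma (a x : ℝ) : ℝ :=
  ∫ t in Ioc 0 x, t ^ (a - 1) * exp (-t)

lemma integrableOn_rpow_mul_exp_neg_mul_Ioi {a r : ℝ} (ha : 0 < a) (hr : 0 < r) :
    IntegrableOn (fun t : ℝ => t ^ (a - 1) * exp (-(r * t))) (Ioi 0) :=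
  (integrableOn_rpow_mul_exp_neg_mul_rpow (s := a - 1) (by linarith) one_pos hr).congr_fun
    (fun _ _ => by simp [rpow_one, neg_mul]) measurableSet_Ioi

lemma integrableOn_rpow_mul_exp_neg_Ioi {a : ℝ} (ha : 0 < a) :
    IntegrableOn (fun t : ℝ => t ^ (a - 1) * exp (-t)) (Ioi 0) := by
  simpa using integrableOn_rpow_mul_exp_neg_mul_Ioi ha one_pos

lemma lowerGamma_nonneg (a x : ℝ) : 0 ≤ lowerGamma a x :=
  setIntegral_nonneg measurableSet_Ioc fun _ ht =>
    mul_nonneg (rpow_nonneg ht.1.le _) (exp_pos _).le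

lemma lowerGamma_add_upperGamma {a x : ℝ} (ha : 0 < a) (hx : 0 ≤ x) :
    lowerGamma a x + upperGamma a x = Gamma a := by
  have hint := integrableOn_rpow_mul_exp_neg_Ioi ha
  rw [lowerGamma, upperGamma, ← setIntegral_union (Ioc_disjoint_Ioi le_rfl) measurableSet_Ioi
      (hint.mono_set Ioc_subset_Ioi_self) (hint.mono_set (Ioi_subset_Ioi hx)),
    Ioc_union_Ioi_eq_Ioi hx, Gamma_eq_integral ha]
  exact setIntegral_congr_fun measurableSet_Ioi fun t _ => mul_comm _ _

lemma lowerGamma_le_exp_mul_Gamma {a ℓ : ℝ} (x : ℝ) (ha : 0 < a) (hℓ : 1 ≤ ℓ) :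
    lowerGamma a x ≤ exp ((ℓ - 1) * x) * ((1 / ℓ) ^ a * Gamma a) := by
  have hint : IntegrableOn (fun t => exp ((ℓ - 1) * x) * (t ^ (a - 1) * exp (-(ℓ * t))))
      (Ioi 0) := (integrableOn_rpow_mul_exp_neg_mul_Ioi ha (by linarith)).const_mul _
  have hpointwise : ∀ t ∈ Ioc 0 x, t ^ (a - 1) * exp (-t) ≤
      exp ((ℓ - 1) * x) * (t ^ (a - 1) * exp (-(ℓ * t))) := fun t ht => by
    have : exp (-t) ≤ exp ((ℓ - 1) * x) * exp (-(ℓ * t)) := by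
      rw [← exp_add, exp_le_exp]
      nlinarith [ht.2]
    calc t ^ (a - 1) * exp (-t)
        ≤ t ^ (a - 1) * (exp ((ℓ - 1) * x) * exp (-(ℓ * t))) :=
          mul_le_mul_of_nonneg_left this (rpow_nonneg ht.1.le _)
      _ = _ := by ring
  calc lowerGamma a x
      ≤ ∫ t in Ioc 0 x, exp ((ℓ - 1) * x) * (t ^ (a - 1) * exp (-(ℓ * t))) :=
        setIntegral_mono_on ((integrableOn_rpow_mul_exp_neg_Ioi ha).mono_set Ioc_subset_Ioi_self)
          (hint.mono_set Ioc_subset_Ioi_self) measurableSet_Ioc hpointwise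
    _ ≤ ∫ t in Ioi 0, exp ((ℓ - 1) * x) * (t ^ (a - 1) * exp (-(ℓ * t))) :=
        setIntegral_mono_set hint
          ((ae_restrict_mem measurableSet_Ioi).mono fun t ht =>
            mul_nonneg (exp_pos _).le (mul_nonneg (rpow_nonneg (le_of_lt ht) _) (exp_pos _).le))
          Ioc_subset_Ioi_self.eventuallyLE
    _ = exp ((ℓ - 1) * x) * ((1 / ℓ) ^ a * Gamma a) := by
        rw [integral_const_mul, integral_rpow_mul_exp_neg_mul_Ioi ha (by linarith)]

lemma exp_one_sub_inv_lt_self {ℓ : ℝ} (hℓ : 1 < ℓ) : exp (1 - ℓ⁻¹) < ℓ := by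
  have hℓ0 : 0 < ℓ := by linarith
  have hlog : log ℓ⁻¹ < ℓ⁻¹ - 1 := log_lt_sub_one_of_pos (inv_pos.2 hℓ0) (inv_ne_one.2 hℓ.ne')
  rw [log_inv] at hlog
  calc exp (1 - ℓ⁻¹) < exp (log ℓ) := exp_lt_exp.2 (by linarith)
    _ = ℓ := exp_log hℓ0

lemma lowerGamma_div_Gamma_le_geometric {ℓ : ℝ} (hℓ : 1 ≤ ℓ) (n : ℕ) :
    lowerGamma (n + 1) (n / ℓ) / Gamma (n + 1) ≤ (exp (1 - ℓ⁻¹) / ℓ) ^ n / ℓ := by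
  have hℓ0 : 0 < ℓ := by linarith
  have hG : 0 < Gamma (n + 1) := Gamma_pos_of_pos (by positivity)
  have hexp : exp ((ℓ - 1) * (n / ℓ)) = exp (1 - ℓ⁻¹) ^ n := by
    rw [← exp_nat_mul]; congr 1; field_simp
  have hpow : (1 / ℓ) ^ ((n : ℝ) + 1) = (1 / ℓ) ^ n / ℓ := by
    rw [← Nat.cast_succ, rpow_natCast, pow_succ]; ring
  rw [div_le_iff₀ hG]
  calc lowerGamma (n + 1) (n / ℓ)
      ≤ exp ((ℓ - 1) * (n / ℓ)) * ((1 / ℓ) ^ ((n : ℝ) + 1) * Gamma (n + 1)) :=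
        lowerGamma_le_exp_mul_Gamma _ (by positivity) hℓ
    _ = (exp (1 - ℓ⁻¹) / ℓ) ^ n / ℓ * Gamma (n + 1) := by
        rw [hexp, hpow, div_pow]; ring

theorem upperGamma_ratio_tendsto_one (ℓ : ℝ) (hℓ : 1 < ℓ) :
    Tendsto (fun n : ℕ => upperGamma (n + 1) (n / ℓ) / Real.Gamma (n + 1))
      atTop (nhds 1) := by
  have hℓ0 : 0 < ℓ := by linarith
  have hlower : Tendsto (fun n : ℕ => lowerGamma (n + 1) (n / ℓ) / Gamma (n + 1))
      atTop (nhds 0) := by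
    have hgeom := (tendsto_pow_atTop_nhds_zero_of_lt_one (by positivity)
      ((div_lt_one hℓ0).2 (exp_one_sub_inv_lt_self hℓ))).div_const ℓ
    rw [zero_div] at hgeom
    exact squeeze_zero (fun n => div_nonneg (lowerGamma_nonneg _ _) (Gamma_nonneg_of_nonneg
      (by positivity))) (lowerGamma_div_Gamma_le_geometric hℓ.le) hgeom
  have hsplit : ∀ n : ℕ, upperGamma (n + 1) (n / ℓ) / Gamma (n + 1) =
      1 - lowerGamma (n + 1) (n / ℓ) / Gamma (n + 1) := fun n => by
    rw [eq_sub_iff_add_eq, ← add_div, add_comm,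
      lowerGamma_add_upperGamma (by positivity) (by positivity),
      div_self (Gamma_pos_of_pos (by positivity)).ne']
  simp_rw [hsplit]
  simpa using hlower.const_sub 1
end

section
/- For n ≥ 1, equidistant nodes x_i = a + ℓ·i/n with ℓ > 0, the ∞-norm of the collocation matrix L of the monic Newton basis equals n!·(ℓ/n)^n·∑_{k=0}^n (1/k!)·(n/ℓ)^k. -/
/-!
At equidistant nodes with step `h = ℓ / n` the entries are `L i j = h ^ j * i.descFactorial j`
(the factor `i - i` kills the entries with `j > i`). They are nonnegative and increase with `i`,
so the `∞`-norm is the last row sum `∑ j, h ^ j * n! / (n - j)!`, which becomes the stated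
closed form after reversing the order of summation.
-/

open Finset Nat

theorem Nat.cast_descFactorial_eq_prod_range_sub {R : Type*} [CommRing R] (i j : ℕ) :
    (i.descFactorial j : R) = ∏ k ∈ range j, ((i : R) - k) :=
  (descPochhammer_eval_eq_descFactorial R i j).symm.trans (descPochhammer_eval_eq_prod_range j _)

theorem prod_range_sub_eq_pow_mul_descFactorial {R : Type*} [CommRing R] {x : ℕ → R} {a h : R}
    (hx : ∀ i, x i = a + h * i) (i j : ℕ) :
    ∏ k ∈ range j, (x i - x k) = h ^ j * i.descFactorial j := by
  simp_rw [hx, add_sub_add_left_eq_sub, ← mul_sub, prod_mul_distrib, prod_const, card_range,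
    Nat.cast_descFactorial_eq_prod_range_sub]

theorem sum_range_pow_mul_descFactorial {K : Type*} [Field K] [CharZero K] {h : K} (hh : h ≠ 0)
    (n : ℕ) :
    ∑ j ∈ range (n + 1), h ^ j * n.descFactorial j
      = n ! * h ^ n * ∑ k ∈ range (n + 1), 1 / (k ! : K) * h⁻¹ ^ k := by
  rw [← sum_range_reflect, mul_sum]
  refine sum_congr rfl fun k hk => ?_
  have hkn : k ≤ n := Nat.lt_succ_iff.mp (mem_range.mp hk)
  have hfac : (k ! : K) * n.descFactorial (n - k) = n ! := by
    have := Nat.factorial_mul_descFactorial (Nat.sub_le n k)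
    rw [Nat.sub_sub_self hkn] at this
    exact_mod_cast this
  have hk0 : (k ! : K) ≠ 0 := Nat.cast_ne_zero.mpr k.factorial_ne_zero
  rw [add_tsub_cancel_right, pow_sub₀ h hh hkn, ← hfac, inv_pow]
  field_simp

theorem Monotone.ciSup_eq_top {ι α : Type*} [Preorder ι] [OrderTop ι]
    [ConditionallyCompleteLinearOrder α] {f : ι → α} (hf : Monotone f) : ⨆ i, f i = f ⊤ :=
  ciSup_eq_of_forall_le_of_forall_lt_exists_gt (fun _ => hf le_top) fun _ hw => ⟨⊤, hw⟩

/-- The `∞`-norm of the monic Newton collocation matrix at equidistant nodes. -/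
theorem monic_newton_collocation_norm (n : ℕ) (hn : 1 ≤ n) (a ℓ : ℝ) (hpos : 0 < ℓ)
    (x : ℕ → ℝ) (hx : ∀ i, x i = a + ℓ * i / n)
    (L : Matrix (Fin (n + 1)) (Fin (n + 1)) ℝ)
    (hL : ∀ i j : Fin (n + 1), L i j = ∏ k ∈ Finset.range (j : ℕ), (x i - x k)) :
    (⨆ i : Fin (n + 1), ∑ j : Fin (n + 1), |L i j|)
      = (n.factorial : ℝ) * (ℓ / n) ^ n *
          ∑ k ∈ Finset.range (n + 1), (1 / (k.factorial : ℝ)) * (n / ℓ) ^ k := by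
  have hstep : 0 < ℓ / n := div_pos hpos (by exact_mod_cast hn)
  have hnodes : ∀ i, x i = a + ℓ / n * i := fun i => by rw [hx, mul_div_right_comm]
  have habs : ∀ i j : Fin (n + 1), |L i j| = (ℓ / n) ^ (j : ℕ) * (i : ℕ).descFactorial j := by
    intro i j
    rw [hL, prod_range_sub_eq_pow_mul_descFactorial hnodes, abs_of_nonneg (by positivity)]
  have hmono : Monotone fun i : Fin (n + 1) => ∑ j : Fin (n + 1), |L i j| := by
    intro i i' hii'
    simp only [habs]
    gcongr
    exact hii'
  rw [hmono.ciSup_eq_top, ← inv_div ℓ (n : ℝ), ← sum_range_pow_mul_descFactorial hstep.ne']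
  simp only [habs, Fin.top_eq_last, Fin.val_last]
  exact Fin.sum_univ_eq_sum_range (fun j => (ℓ / n) ^ j * (n.descFactorial j : ℝ)) (n + 1)
end

section
/- If ℓ ≤ 1 (ℓ > 0), then lim_{n→∞} κ_∞(L)^{1/n} = 2e/ℓ, where κ_∞(L) = 2^n·∑_{k=0}^n (1/k!)·(n/ℓ)^k. -/
/-!
For `x = n / ℓ ≥ n` the terms `x ^ k / k!` increase up to `k = n`, so the truncated exponential
series lies between `x ^ n / n!` and `(n + 1) x ^ n / n!`. With `(n / e) ^ n ≤ n! ≤ e n (n / e) ^ n`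
(the upper bound from the monotonicity of the Stirling sequence) this pins `κ_n` between
`(2e/ℓ) ^ n / (e n)` and `e n (2e/ℓ) ^ n`, and `(e n) ^ (1 / n) → 1`.
-/

open Real Filter

open scoped Nat Topology

theorem factorial_le_exp_one_mul_sqrt_mul_pow {n : ℕ} (hn : n ≠ 0) :
    (n ! : ℝ) ≤ exp 1 * √n * (n / exp 1) ^ n := by
  have h : Stirling.stirlingSeq n ≤ Stirling.stirlingSeq 1 := by
    obtain ⟨m, rfl⟩ := Nat.exists_eq_succ_of_ne_zero hn
    exact Stirling.stirlingSeq'_antitone (Nat.zero_le m)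
  rw [Stirling.stirlingSeq_one, Stirling.stirlingSeq, Real.sqrt_mul zero_le_two,
    div_le_div_iff₀ (by positivity) (by positivity)] at h
  have h2 : (0 : ℝ) < √2 := by positivity
  nlinarith

theorem pow_div_factorial_le_of_le {x : ℝ} {k n : ℕ} (hkn : k ≤ n) (hnx : (n : ℝ) ≤ x) :
    x ^ k / k ! ≤ x ^ n / n ! := by
  induction n, hkn using Nat.le_induction with
  | base => rfl
  | succ m _ ih =>
    push_cast at hnx
    have hx : 0 ≤ x := by linarith
    calc x ^ k / k ! ≤ x ^ m / m ! := ih (by linarith)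
      _ ≤ x ^ m / m ! * (x / (m + 1)) :=
        le_mul_of_one_le_right (by positivity) ((one_le_div (by positivity)).2 hnx)
      _ = x ^ (m + 1) / (m + 1)! := by
        rw [pow_succ, Nat.factorial_succ]; push_cast; field_simp

theorem sum_range_pow_div_factorial_le_mul {x : ℝ} {n : ℕ} (hnx : (n : ℝ) ≤ x) :
    ∑ k ∈ Finset.range (n + 1), x ^ k / k ! ≤ (n + 1) * (x ^ n / n !) := by
  calc ∑ k ∈ Finset.range (n + 1), x ^ k / k !
      ≤ ∑ _k ∈ Finset.range (n + 1), x ^ n / n ! :=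
        Finset.sum_le_sum fun k hk =>
          pow_div_factorial_le_of_le (Nat.lt_succ_iff.mp (Finset.mem_range.mp hk)) hnx
    _ = (n + 1) * (x ^ n / n !) := by simp

theorem pow_div_factorial_le_sum_range {x : ℝ} (hx : 0 ≤ x) (n : ℕ) :
    x ^ n / n ! ≤ ∑ k ∈ Finset.range (n + 1), x ^ k / k ! :=
  Finset.single_le_sum (f := fun k => x ^ k / k !) (fun k _ => by positivity)
    (Finset.self_mem_range_succ n)

theorem div_le_sum_range_pow_div_factorial {x : ℝ} {n : ℕ} (hn : n ≠ 0) (hx : 0 ≤ x) :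
    (exp 1 * x / n) ^ n / (exp 1 * n) ≤ ∑ k ∈ Finset.range (n + 1), x ^ k / k ! := by
  have hn1 : (1 : ℝ) ≤ n := Nat.one_le_cast.mpr (Nat.one_le_iff_ne_zero.mpr hn)
  have hfact : (n ! : ℝ) ≤ exp 1 * n * (n / exp 1) ^ n :=
    (factorial_le_exp_one_mul_sqrt_mul_pow hn).trans <| by
      gcongr; exact (Real.sqrt_le_left (by positivity)).mpr (by nlinarith)
  calc (exp 1 * x / n) ^ n / (exp 1 * n) = x ^ n / (exp 1 * n * (n / exp 1) ^ n) := by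
        rw [div_pow, mul_pow, div_pow]; field_simp
    _ ≤ x ^ n / n ! := by gcongr
    _ ≤ _ := pow_div_factorial_le_sum_range hx n

theorem sum_range_pow_div_factorial_le {x : ℝ} {n : ℕ} (hn : n ≠ 0) (hnx : (n : ℝ) ≤ x) :
    ∑ k ∈ Finset.range (n + 1), x ^ k / k ! ≤ exp 1 * n * (exp 1 * x / n) ^ n := by
  have hn1 : (1 : ℝ) ≤ n := Nat.one_le_cast.mpr (Nat.one_le_iff_ne_zero.mpr hn)
  have hx : 0 ≤ x := by linarith
  have hsucc : (n : ℝ) + 1 ≤ exp 1 * n := by nlinarith [Real.add_one_le_exp (1 : ℝ)]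
  have hfact : (n : ℝ) ^ n / n ! ≤ exp 1 ^ n := by
    simpa [← Real.exp_nat_mul] using Real.pow_div_factorial_le_exp (n : ℝ) (Nat.cast_nonneg n) n
  calc ∑ k ∈ Finset.range (n + 1), x ^ k / k ! ≤ (n + 1) * (x ^ n / n !) :=
        sum_range_pow_div_factorial_le_mul hnx
    _ ≤ exp 1 * n * (x ^ n / n !) := by gcongr
    _ = exp 1 * n * ((x / n) ^ n * (n ^ n / n !)) := by rw [div_pow]; field_simp
    _ ≤ exp 1 * n * ((x / n) ^ n * exp 1 ^ n) := by gcongr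
    _ = exp 1 * n * (exp 1 * x / n) ^ n := by ring

theorem tendsto_mul_natCast_rpow_one_div {c : ℝ} (hc : 0 < c) :
    Tendsto (fun n : ℕ => (c * n) ^ ((1 : ℝ) / n)) atTop (𝓝 1) := by
  have hconst : Tendsto (fun n : ℕ => c ^ ((1 : ℝ) / n)) atTop (𝓝 1) := by
    simpa using tendsto_const_nhds.rpow tendsto_one_div_atTop_nhds_zero_nat (Or.inl hc.ne')
  have hself : Tendsto (fun n : ℕ => (n : ℝ) ^ ((1 : ℝ) / n)) atTop (𝓝 1) :=
    tendsto_rpow_div.comp tendsto_natCast_atTop_atTop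
  simpa [Real.mul_rpow hc.le (Nat.cast_nonneg _)] using hconst.mul hself

theorem tendsto_rpow_one_div_of_le_of_le {u : ℕ → ℝ} {r c : ℝ} (hr : 0 < r) (hc : 0 < c)
    (hlow : ∀ᶠ n in atTop, r ^ n / (c * n) ≤ u n) (hup : ∀ᶠ n in atTop, u n ≤ c * n * r ^ n) :
    Tendsto (fun n : ℕ => u n ^ ((1 : ℝ) / n)) atTop (𝓝 r) := by
  have hroot : ∀ n : ℕ, n ≠ 0 → (r ^ n) ^ ((1 : ℝ) / n) = r := fun n hn => by
    rw [one_div, Real.pow_rpow_inv_natCast hr.le hn]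
  have hcn := tendsto_mul_natCast_rpow_one_div hc
  have hlower : Tendsto (fun n : ℕ => r / (c * n) ^ ((1 : ℝ) / n)) atTop (𝓝 r) := by
    have h := (tendsto_const_nhds (x := r)).div hcn one_ne_zero
    rwa [div_one] at h
  have hupper : Tendsto (fun n : ℕ => (c * n) ^ ((1 : ℝ) / n) * r) atTop (𝓝 r) := by
    simpa only [one_mul] using hcn.mul_const r
  refine tendsto_of_tendsto_of_tendsto_of_le_of_le' hlower hupper ?_ ?_
  · filter_upwards [hlow, eventually_ne_atTop 0] with n hn hn0
    rw [← hroot n hn0, ← Real.div_rpow (by positivity) (by positivity)]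
    exact Real.rpow_le_rpow (by positivity) hn (by positivity)
  · filter_upwards [hlow, hup, eventually_ne_atTop 0] with n hl hn hn0
    rw [← hroot n hn0, ← Real.mul_rpow (by positivity) (by positivity)]
    exact Real.rpow_le_rpow ((by positivity : (0 : ℝ) ≤ _).trans hl) hn (by positivity)

theorem kappa_root_tendsto_small_length (ℓ : ℝ) (hpos : 0 < ℓ) (hℓ : ℓ ≤ 1) :
    Tendsto
      (fun n : ℕ =>
        (2 ^ n * ∑ k ∈ Finset.range (n + 1), (1 / (k.factorial : ℝ)) * (n / ℓ) ^ k)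
          ^ ((1 : ℝ) / n))
      atTop (nhds (2 * Real.exp 1 / ℓ)) := by
  have hratio : ∀ n : ℕ, n ≠ 0 → exp 1 * (n / ℓ) / n = exp 1 / ℓ := fun n hn => by
    field_simp
  have hpow : ∀ n : ℕ, (2 * exp 1 / ℓ) ^ n = 2 ^ n * (exp 1 / ℓ) ^ n := fun n => by
    rw [← mul_pow, mul_div_assoc]
  simp only [one_div_mul_eq_div]
  refine tendsto_rpow_one_div_of_le_of_le (by positivity) (exp_pos 1) ?_ ?_
  · filter_upwards [eventually_ne_atTop 0] with n hn
    rw [hpow, mul_div_assoc, ← hratio n hn]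
    gcongr
    exact div_le_sum_range_pow_div_factorial hn (by positivity)
  · filter_upwards [eventually_ne_atTop 0] with n hn
    have hnx : (n : ℝ) ≤ n / ℓ := le_div_self (Nat.cast_nonneg n) hpos hℓ
    rw [hpow, mul_left_comm, ← hratio n hn]
    gcongr
    exact sum_range_pow_div_factorial_le hn hnx
end
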